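/- Assume g is simply-laced or of type B, ϖ_k is a minuscule fundamental weight, and J = I \ {k}. Then every element y ∈ W^J with y ≠ e factors uniquely as y = y' z s_k with y' ∈ W^J, z ∈ W_J, and ℓ(y) = ℓ(y') + ℓ(z) + 1. -/
import Mathlib


/-- An axiomatized finite crystallographic root system datum, with weight/root
space `V` over `ℚ`, simple roots `α i`, an invariant inner product `B`,
Weyl group `W` acting faithfully on `V`, and the set of roots `isRoot`. -/
structure RootSystemData (I : Type) [Fintype I] [DecidableEq I] where
  V : Type
  [instAddCommGroup : AddCommGroup V]
  [instModule : Module ℚ V]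
  W : Type
  [instGroup : Group W]
  α : I → V
  B : V →ₗ[ℚ] V →ₗ[ℚ] ℚ
  toLin : W →* Module.End ℚ V
  s : I → W
  isRoot : V → Prop
  B_symm : ∀ x y, B x y = B y x
  B_pos : ∀ β, isRoot β → 0 < B β β
  B_inv : ∀ (w : W) (x y : V), B (toLin w x) (toLin w y) = B x y
  root_simple : ∀ i, isRoot (α i)
  root_inv : ∀ (w : W) (β : V), isRoot β → isRoot (toLin w β)
  root_gen : ∀ β, isRoot β → ∃ (w : W) (i : I), β = toLin w (α i)
  root_finite : (setOf isRoot).Finite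
  indep : LinearIndependent ℚ α
  s_act : ∀ i x, toLin (s i) x = x - (2 * B (α i) x / B (α i) (α i)) • α i
  gen : Subgroup.closure (Set.range s) = ⊤
  faithful : Function.Injective toLin
  root_int : ∀ β, isRoot β → ∃ c : I → ℤ, β = ∑ i, (c i : ℚ) • α i
  pos_or_neg : ∀ β, isRoot β →
    (∃ c : I → ℕ, β = ∑ i, (c i : ℚ) • α i) ∨ (∃ c : I → ℕ, -β = ∑ i, (c i : ℚ) • α i)

attribute [instance] RootSystemData.instAddCommGroup RootSystemData.instModule
  RootSystemData.instGroup

namespace RootSystemData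

variable {I : Type} [Fintype I] [DecidableEq I] (R : RootSystemData I)

/-- `β` is a positive root. -/
def IsPos (β : R.V) : Prop :=
  R.isRoot β ∧ ∃ c : I → ℕ, β = ∑ i, (c i : ℚ) • R.α i

/-- The finite set of positive roots. -/
noncomputable def posFinset : Finset R.V :=
  (Set.Finite.subset R.root_finite (fun _ hb => hb.1) : (setOf R.IsPos).Finite).toFinset

/-- Half the sum of the positive roots. -/
noncomputable def ρ : R.V := (2 : ℚ)⁻¹ • ∑ β ∈ R.posFinset, β

/-- The pairing `⟨x, β∨⟩` of `x` with the coroot of `β`. -/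
noncomputable def coroot (β x : R.V) : ℚ := 2 * R.B β x / R.B β β

open Classical in
/-- The reflection `s_β ∈ W` in a root `β`. -/
noncomputable def refl (β : R.V) : R.W :=
  if h : R.isRoot β then
    (R.root_gen β h).choose * R.s (R.root_gen β h).choose_spec.choose *
      (R.root_gen β h).choose⁻¹
  else 1

/-- The length function on the Weyl group. -/
noncomputable def len (w : R.W) : ℕ :=
  sInf {n | ∃ l : List I, l.length = n ∧ (l.map R.s).prod = w}

/-- Bruhat order: generated by multiplication by reflections which increases length. -/
def bruhatLE : R.W → R.W → Prop :=
  Relation.ReflTransGen (fun u v => (∃ β, R.IsPos β ∧ v = R.refl β * u) ∧ R.len u < R.len v)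

def bruhatLT (u v : R.W) : Prop := R.bruhatLE u v ∧ u ≠ v

/-- The parabolic subgroup `W_J`. -/
def WJ (J : Set I) : Subgroup R.W := Subgroup.closure (R.s '' J)

/-- `w` is a minimal-length representative of its coset `w W_J`. -/
def IsMinRep (J : Set I) (w : R.W) : Prop :=
  ∀ z ∈ R.WJ J, R.len w ≤ R.len (w * z)

/-- `β ∈ Δ⁺_J`: positive roots in the span of the simple roots indexed by `J`. -/
def posJ (J : Set I) (β : R.V) : Prop :=
  R.IsPos β ∧ β ∈ Submodule.span ℚ (R.α '' J)

/-- A Bruhat edge `x → x s_β` in the quantum Bruhat graph. -/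
def BruhatEdge (x : R.W) (β : R.V) : Prop :=
  R.IsPos β ∧ R.len (x * R.refl β) = R.len x + 1

/-- A quantum edge `x → x s_β` in the quantum Bruhat graph. -/
def QuantumEdge (x : R.W) (β : R.V) : Prop :=
  R.IsPos β ∧ (R.len (x * R.refl β) : ℚ) = R.len x + 1 - 2 * R.coroot β R.ρ

/-- An edge of the quantum Bruhat graph. -/
def QBGEdge (x : R.W) (β : R.V) : Prop := R.BruhatEdge x β ∨ R.QuantumEdge x β

/-- A quantum root: `ℓ(s_β) = 2⟨ρ, β∨⟩ - 1`. -/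
def IsQuantumRoot (β : R.V) : Prop :=
  R.IsPos β ∧ (R.len (R.refl β) : ℚ) = 2 * R.coroot β R.ρ - 1

/-- A long root (maximal squared length); in simply-laced type all roots are long. -/
def IsLong (β : R.V) : Prop :=
  R.isRoot β ∧ ∀ γ, R.isRoot γ → R.B γ γ ≤ R.B β β

/-- A short root. -/
def IsShort (β : R.V) : Prop := R.isRoot β ∧ ¬ R.IsLong β

def IsSimplyLaced : Prop :=
  ∀ β γ, R.isRoot β → R.isRoot γ → R.B β β = R.B γ γ

def IsIrreducible : Prop :=
  Nonempty I ∧ ∀ J : Set I,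
    (∀ i ∈ J, ∀ j ∉ J, R.B (R.α i) (R.α j) = 0) → J = ∅ ∨ J = Set.univ

/-- `θ` is the highest root. -/
def IsHighestRoot (θ : R.V) : Prop :=
  R.IsPos θ ∧ ∀ β, R.IsPos β → ∃ c : I → ℕ, θ - β = ∑ i, (c i : ℚ) • R.α i

/-- `ϖ` is the fundamental weight associated to `k`. -/
def IsFundamental (k : I) (ϖ : R.V) : Prop :=
  ∀ i, R.coroot (R.α i) ϖ = if i = k then 1 else 0

/-- `ϖ` is minuscule. -/
def IsMinuscule (ϖ : R.V) : Prop :=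
  ∀ β, R.isRoot β → R.coroot β ϖ ∈ ({-1, 0, 1} : Set ℚ)

/-- A strict total order on `Δ⁺` which is a reflection (convex) order. -/
def IsReflectionOrder (lt : R.V → R.V → Prop) : Prop :=
  (∀ β, ¬ lt β β) ∧ (∀ a b c, lt a b → lt b c → lt a c) ∧
  (∀ β γ, R.IsPos β → R.IsPos γ → β ≠ γ → lt β γ ∨ lt γ β) ∧
  (∀ β γ, R.IsPos β → R.IsPos γ → R.IsPos (β + γ) →
    (lt β (β + γ) ∧ lt (β + γ) γ) ∨ (lt γ (β + γ) ∧ lt (β + γ) β))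

end RootSystemData

open RootSystemData in
/-- A directed path in the quantum Bruhat graph with the given list of labels. -/
def QBGPath {I : Type} [Fintype I] [DecidableEq I] (R : RootSystemData I) :
    R.W → List R.V → R.W → Prop
  | x, [], y => x = y
  | x, β :: l, y => R.QBGEdge x β ∧ QBGPath R (x * R.refl β) l y

open RootSystemData in
/-- A directed path in the Bruhat graph (Bruhat edges only). -/
def BGPath {I : Type} [Fintype I] [DecidableEq I] (R : RootSystemData I) :
    R.W → List R.V → R.W → Prop
  | x, [], y => x = y
  | x, β :: l, y => R.BruhatEdge x β ∧ BGPath R (x * R.refl β) l y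

/-- The Cartan pairing `⟨α_j, α_i∨⟩` of type `B_n` (Bourbaki labelling, shifted
to be 0-based: the short simple root is the last one, index `n-1`). -/
def BCartan (n : ℕ) (i j : Fin n) : ℚ :=
  if i = j then 2
  else if (i : ℕ) = n - 1 ∧ (j : ℕ) + 1 = n - 1 then -2
  else if ((i : ℕ) + 1 = j ∨ (j : ℕ) + 1 = i) then -1
  else 0

/-- `R` is of type `B_n` (via the identification `e` of its index set with `Fin n`). -/
def IsTypeB {I : Type} [Fintype I] [DecidableEq I] (R : RootSystemData I)
    (n : ℕ) (e : I ≃ Fin n) : Prop :=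
  2 ≤ n ∧ ∀ i j, R.coroot (R.α i) (R.α j) = BCartan n (e i) (e j)

/-- The product `s_{a+1} s_{a+2} ⋯ s_{b+1}` (0-based: indices `a, a+1, …, b`). -/
noncomputable def sSeq {n : ℕ} (hn : 0 < n) (R : RootSystemData (Fin n)) (a b : ℕ) : R.W :=
  ((List.range (b + 1 - a)).map (fun t => R.s ⟨(a + t) % n, Nat.mod_lt _ hn⟩)).prod

/-- The sum `α_{a+1} + ⋯ + α_b` of simple roots (0-based half-open interval `[a, b)`). -/
def aSum {n : ℕ} (hn : 0 < n) (R : RootSystemData (Fin n)) (a b : ℕ) : R.V :=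
  ∑ t ∈ Finset.Ico a b, R.α ⟨t % n, Nat.mod_lt _ hn⟩

namespace RootSystemData

variable {I : Type} [Fintype I] [DecidableEq I] (R : RootSystemData I)

lemma coords_eq {a b : I → ℚ} (h : ∑ i, a i • R.α i = ∑ i, b i • R.α i) : a = b := by
  have h0 : ∑ i, (a i - b i) • R.α i = 0 := by
    simp [sub_smul, Finset.sum_sub_distrib, h]
  have := Fintype.linearIndependent_iff.mp R.indep (fun i => a i - b i) h0
  funext i; have h2 := this i; linarith

lemma root_ne_zero {β : R.V} (h : R.isRoot β) : β ≠ 0 := by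
  intro h0
  have := R.B_pos β h
  rw [h0] at this
  simp at this

lemma root_neg {β : R.V} (h : R.isRoot β) : R.isRoot (-β) := by
  obtain ⟨w, i, rfl⟩ := R.root_gen β h
  have hs : R.toLin (R.s i) (R.α i) = -(R.α i) := by
    rw [R.s_act]
    have hB : R.B (R.α i) (R.α i) ≠ 0 := ne_of_gt (R.B_pos _ (R.root_simple i))
    rw [mul_div_assoc, div_self hB]
    module
  have : -(R.toLin w (R.α i)) = R.toLin (w * R.s i) (R.α i) := by
    rw [map_mul]
    show _ = R.toLin w (R.toLin (R.s i) (R.α i))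
    rw [hs, map_neg]
  rw [this]
  exact R.root_inv _ _ (R.root_simple i)

/-- `β` is a negative root. -/
def IsNeg (β : R.V) : Prop := R.IsPos (-β)

lemma pos_or_neg' {β : R.V} (h : R.isRoot β) : R.IsPos β ∨ R.IsNeg β := by
  rcases R.pos_or_neg β h with h1 | h1
  · exact Or.inl ⟨h, h1⟩
  · exact Or.inr ⟨R.root_neg h, h1⟩

lemma not_pos_and_neg {β : R.V} : ¬ (R.IsPos β ∧ R.IsNeg β) := by
  rintro ⟨⟨hr, c, hc⟩, _, d, hd⟩
  have hsum : ∑ i, ((c i : ℚ) + (d i : ℚ)) • R.α i = ∑ i, (0 : ℚ) • R.α i := by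
    simp only [add_smul, Finset.sum_add_distrib, ← hc, ← hd, add_neg_cancel]
    simp
  have hcd := R.coords_eq hsum
  have hc0 : ∀ i, (c i : ℚ) = 0 := by
    intro i
    have h2 := congrFun hcd i
    have : (0:ℚ) ≤ (c i : ℚ) := Nat.cast_nonneg _
    have : (0:ℚ) ≤ (d i : ℚ) := Nat.cast_nonneg _
    linarith
  apply R.root_ne_zero hr
  rw [hc]
  simp only [hc0]
  simp

lemma s_sq (i : I) : R.s i * R.s i = 1 := by
  apply R.faithful
  rw [map_mul, map_one]
  ext x
  show R.toLin (R.s i) (R.toLin (R.s i) x) = x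
  have hB : R.B (R.α i) (R.α i) ≠ 0 := ne_of_gt (R.B_pos _ (R.root_simple i))
  rw [R.s_act, R.s_act]
  rw [map_sub, map_smul]
  simp only [LinearMap.sub_apply, LinearMap.smul_apply, smul_eq_mul]
  field_simp
  module

lemma toLin_mul (a b : R.W) (x : R.V) :
    R.toLin (a * b) x = R.toLin a (R.toLin b x) := by
  rw [map_mul]; rfl

lemma s_apply_self (i : I) : R.toLin (R.s i) (R.α i) = -(R.α i) := by
  rw [R.s_act]
  have hB : R.B (R.α i) (R.α i) ≠ 0 := ne_of_gt (R.B_pos _ (R.root_simple i))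
  rw [mul_div_assoc, div_self hB]
  module

lemma root_apply (w : R.W) (i : I) : R.isRoot (R.toLin w (R.α i)) :=
  R.root_inv _ _ (R.root_simple i)

end RootSystemData
namespace RootSystemData

variable {I : Type} [Fintype I] [DecidableEq I] (R : RootSystemData I)

lemma root_norm {β : R.V} (h : R.isRoot β) :
    ∃ m, R.B β β = R.B (R.α m) (R.α m) := by
  obtain ⟨w, m, rfl⟩ := R.root_gen β h
  exact ⟨m, R.B_inv w _ _⟩

lemma coroot_rel (i j : I) :
    R.coroot (R.α i) (R.α j) * R.B (R.α i) (R.α i) =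
    R.coroot (R.α j) (R.α i) * R.B (R.α j) (R.α j) := by
  have hi : R.B (R.α i) (R.α i) ≠ 0 := ne_of_gt (R.B_pos _ (R.root_simple i))
  have hj : R.B (R.α j) (R.α j) ≠ 0 := ne_of_gt (R.B_pos _ (R.root_simple j))
  unfold coroot
  field_simp
  try rw [R.B_symm (R.α j) (R.α i)]
  try rw [R.B_symm (R.α i) (R.α j)]
  try ring

lemma norm_ratio (htype : R.IsSimplyLaced ∨ ∃ (n : ℕ) (e : I ≃ Fin n), IsTypeB R n e)
    (i m : I) : R.B (R.α m) (R.α m) ≤ 2 * R.B (R.α i) (R.α i) := by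
  rcases htype with hsl | ⟨n, e, hn2, hB⟩
  · have h1 := hsl _ _ (R.root_simple m) (R.root_simple i)
    have h2 := R.B_pos _ (R.root_simple i)
    linarith
  · set f : I → ℚ := fun j => R.B (R.α j) (R.α j) with hf
    have fpos : ∀ j, 0 < f j := fun j => R.B_pos _ (R.root_simple j)
    set r : ℚ := f (e.symm ⟨n-1, by omega⟩) with hr
    have step0 : f (e.symm ⟨n-2, by omega⟩) = 2 * r := by
      have h1 := R.coroot_rel (e.symm ⟨n-1, by omega⟩) (e.symm ⟨n-2, by omega⟩)
      rw [hB, hB] at h1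
      simp only [Equiv.apply_symm_apply] at h1
      have c1 : BCartan n ⟨n-1, by omega⟩ ⟨n-2, by omega⟩ = -2 := by
        simp only [BCartan, Fin.mk.injEq, Fin.val_mk, true_and, and_true, true_or,
          or_true, if_true]
        split_ifs <;> first | (exfalso; omega) | norm_num
      have c2 : BCartan n ⟨n-2, by omega⟩ ⟨n-1, by omega⟩ = -1 := by
        simp only [BCartan, Fin.mk.injEq, Fin.val_mk, true_and, and_true, true_or,
          or_true, if_true]
        split_ifs <;> first | (exfalso; omega) | norm_num
      rw [c1, c2] at h1
      rw [hr]; linarith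
    have key : ∀ d t (ht : t + 2 + d = n), f (e.symm ⟨t, by omega⟩) = 2 * r := by
      intro d
      induction d with
      | zero =>
        intro t ht
        have : t = n - 2 := by omega
        subst this
        exact step0
      | succ d ih =>
        intro t ht
        have h1 := R.coroot_rel (e.symm ⟨t, by omega⟩) (e.symm ⟨t+1, by omega⟩)
        rw [hB, hB] at h1
        simp only [Equiv.apply_symm_apply] at h1
        have c1 : BCartan n ⟨t, by omega⟩ ⟨t+1, by omega⟩ = -1 := by
          simp only [BCartan, Fin.mk.injEq, Fin.val_mk, true_and, and_true, true_or,
            or_true, if_true]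
          split_ifs <;> first | (exfalso; omega) | norm_num
        have c2 : BCartan n ⟨t+1, by omega⟩ ⟨t, by omega⟩ = -1 := by
          simp only [BCartan, Fin.mk.injEq, Fin.val_mk, true_and, and_true, true_or,
            or_true, if_true]
          split_ifs <;> first | (exfalso; omega) | norm_num
        rw [c1, c2] at h1
        have h2 := ih (t+1) (by omega)
        have : f (e.symm ⟨t+1, by omega⟩) = 2 * r := h2
        linarith
    have hbound : ∀ j, r ≤ f j ∧ f j ≤ 2 * r := by
      intro j
      have hrpos : 0 < r := by rw [hr]; exact fpos _
      by_cases hj : ((e j : ℕ)) = n - 1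
      · have hej : e j = ⟨n-1, by omega⟩ := Fin.ext (by simp [hj])
        have hfj : f j = r := by rw [hr, ← hej, Equiv.symm_apply_apply]
        rw [hfj]
        constructor
        · linarith
        · linarith
      · have hlt : (e j : ℕ) + 2 ≤ n := by
          have := (e j).isLt; omega
        have h2 := key (n - ((e j : ℕ) + 2)) (e j) (by omega)
        simp only [Fin.eta, Equiv.symm_apply_apply] at h2
        constructor <;> linarith
    have hm := hbound m
    have hi := hbound i
    show f m ≤ 2 * f i
    have hrpos : 0 < r := fpos _
    have : f m ≤ 2 * r := hm.2
    have : r ≤ f i := hi.1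
    linarith

end RootSystemData
namespace RootSystemData

variable {I : Type} [Fintype I] [DecidableEq I] (R : RootSystemData I)

lemma s_perm (htype : R.IsSimplyLaced ∨ ∃ (n : ℕ) (e : I ≃ Fin n), IsTypeB R n e)
    (i : I) {β : R.V} (hβ : R.IsPos β) (hne : β ≠ R.α i) :
    R.IsPos (R.toLin (R.s i) β) := by
  have hroot : R.isRoot (R.toLin (R.s i) β) := R.root_inv _ _ hβ.1
  obtain ⟨c, hc⟩ := hβ.2
  set q : ℚ := 2 * R.B (R.α i) β / R.B (R.α i) (R.α i) with hq
  have hact : R.toLin (R.s i) β = β - q • R.α i := R.s_act i β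
  by_cases hcase : ∃ j, j ≠ i ∧ c j ≠ 0
  · obtain ⟨j, hji, hcj⟩ := hcase
    rcases R.pos_or_neg' hroot with h | h
    · exact h
    exfalso
    obtain ⟨_, d, hd⟩ := h
    rw [hact] at hd
    have heq : ∑ m, ((c m : ℚ) + (d m : ℚ)) • R.α m
        = ∑ m, (if m = i then q else 0) • R.α m := by
      have h1 : ∑ m, ((c m : ℚ)) • R.α m + ∑ m, ((d m : ℚ)) • R.α m = q • R.α i := by
        rw [← hc, ← hd]; abel
      rw [← Finset.sum_add_distrib] at h1
      have h2 : ∑ m, (if m = i then q else 0) • R.α m = q • R.α i := by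
        rw [Finset.sum_eq_single i]
        · simp
        · intro b _ hb; simp [hb]
        · simp
      rw [h2]
      rw [← h1]
      congr 1; funext m; rw [add_smul]
    have := congrFun (R.coords_eq heq) j
    simp only [if_neg hji] at this
    have hc0 : (0:ℚ) ≤ (c j : ℚ) := Nat.cast_nonneg _
    have hd0 : (0:ℚ) ≤ (d j : ℚ) := Nat.cast_nonneg _
    have : (c j : ℚ) = 0 := by linarith [this]
    exact hcj (Nat.cast_eq_zero.mp this)
  · push_neg at hcase
    exfalso
    have hβi : β = (c i : ℚ) • R.α i := by
      rw [hc, Finset.sum_eq_single i]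
      · intro b _ hb; rw [hcase b hb]; simp
      · simp
    have hci0 : c i ≠ 0 := by
      intro h0
      apply R.root_ne_zero hβ.1
      rw [hβi, h0]; simp
    have hci1 : c i ≠ 1 := by
      intro h1
      apply hne
      rw [hβi, h1]; simp
    have hci2 : 2 ≤ c i := by omega
    have hnorm : R.B β β = (c i : ℚ)^2 * R.B (R.α i) (R.α i) := by
      rw [hβi]
      simp only [map_smul, LinearMap.smul_apply, smul_eq_mul]
      ring
    obtain ⟨m, hm⟩ := R.root_norm hβ.1
    have hratio := R.norm_ratio htype i m
    have hfi : 0 < R.B (R.α i) (R.α i) := R.B_pos _ (R.root_simple i)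
    have hc4 : (4:ℚ) ≤ (c i : ℚ)^2 := by
      have : (2:ℚ) ≤ (c i : ℚ) := by exact_mod_cast hci2
      nlinarith
    nlinarith [hm, hnorm, hratio, hfi, hc4]

end RootSystemData
namespace RootSystemData

variable {I : Type} [Fintype I] [DecidableEq I] (R : RootSystemData I)

lemma prod_reverse_inv (l : List I) :
    ((l.reverse.map R.s).prod) = ((l.map R.s).prod)⁻¹ := by
  induction l with
  | nil => simp
  | cons j t ih =>
    simp only [List.reverse_cons, List.map_append, List.map_cons, List.prod_append,
      List.prod_cons, List.map_nil, List.prod_nil, mul_one, ih, mul_inv_rev]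
    congr 1
    rw [eq_comm, inv_eq_iff_mul_eq_one, R.s_sq]

lemma exists_word (w : R.W) : ∃ l : List I, (l.map R.s).prod = w := by
  have hw : w ∈ Subgroup.closure (Set.range R.s) := by rw [R.gen]; trivial
  refine Subgroup.closure_induction ?_ ?_ ?_ ?_ hw
  · rintro x ⟨i, rfl⟩
    exact ⟨[i], by simp⟩
  · exact ⟨[], by simp⟩
  · rintro x y _ _ ⟨lx, rfl⟩ ⟨ly, rfl⟩
    exact ⟨lx ++ ly, by simp⟩
  · rintro x _ ⟨lx, rfl⟩
    exact ⟨lx.reverse, R.prod_reverse_inv lx⟩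

lemma len_nonempty (w : R.W) :
    {n | ∃ l : List I, l.length = n ∧ (l.map R.s).prod = w}.Nonempty := by
  obtain ⟨l, hl⟩ := R.exists_word w
  exact ⟨l.length, l, rfl, hl⟩

lemma len_le {w : R.W} {l : List I} (h : (l.map R.s).prod = w) :
    R.len w ≤ l.length :=
  Nat.sInf_le ⟨l, rfl, h⟩

lemma len_spec (w : R.W) : ∃ l : List I, l.length = R.len w ∧ (l.map R.s).prod = w :=
  Nat.sInf_mem (R.len_nonempty w)

lemma len_one : R.len 1 = 0 :=
  Nat.le_antisymm (R.len_le (l := []) (by simp)) (Nat.zero_le _)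

lemma eq_one_of_len_eq_zero {w : R.W} (h : R.len w = 0) : w = 1 := by
  obtain ⟨l, hl, hp⟩ := R.len_spec w
  rw [h, List.length_eq_zero_iff] at hl
  rw [hl] at hp
  simpa using hp.symm

lemma len_mul_le (a b : R.W) : R.len (a * b) ≤ R.len a + R.len b := by
  obtain ⟨la, hla, hpa⟩ := R.len_spec a
  obtain ⟨lb, hlb, hpb⟩ := R.len_spec b
  have : ((la ++ lb).map R.s).prod = a * b := by simp [hpa, hpb]
  calc R.len (a * b) ≤ (la ++ lb).length := R.len_le this
    _ = R.len a + R.len b := by simp [hla, hlb]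

lemma len_mul_s_le (w : R.W) (i : I) : R.len (w * R.s i) ≤ R.len w + 1 := by
  have h := R.len_mul_le w (R.s i)
  have : R.len (R.s i) ≤ 1 := R.len_le (l := [i]) (by simp)
  omega

lemma len_le_mul_s (w : R.W) (i : I) : R.len w ≤ R.len (w * R.s i) + 1 := by
  have h := R.len_mul_s_le (w * R.s i) i
  rw [mul_assoc, R.s_sq, mul_one] at h
  exact h

lemma refl_conj {u : R.W} {i j : I} (h : R.toLin u (R.α i) = R.α j) :
    R.s j * u = u * R.s i := by
  have key : u * R.s i * u⁻¹ = R.s j := by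
    apply R.faithful
    ext x
    show R.toLin (u * R.s i * u⁻¹) x = R.toLin (R.s j) x
    rw [R.toLin_mul, R.toLin_mul, R.s_act]
    rw [map_sub, map_smul]
    have huu : ∀ y : R.V, R.toLin u (R.toLin u⁻¹ y) = y := by
      intro y
      rw [← R.toLin_mul, mul_inv_cancel, map_one]
      rfl
    rw [huu x, h]
    have hB1 : R.B (R.α i) (R.toLin u⁻¹ x) = R.B (R.α j) x := by
      rw [← R.B_inv u, h, huu]
    have hB2 : R.B (R.α i) (R.α i) = R.B (R.α j) (R.α j) := by
      rw [← R.B_inv u, h]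
    rw [R.s_act, hB1, hB2]
  calc R.s j * u = (u * R.s i * u⁻¹) * u := by rw [key]
    _ = u * R.s i := by group

lemma exchange (htype : R.IsSimplyLaced ∨ ∃ (n : ℕ) (e : I ≃ Fin n), IsTypeB R n e)
    (l : List I) (i : I) (h : R.IsNeg (R.toLin (l.map R.s).prod (R.α i))) :
    ∃ l' : List I, l'.length + 1 = l.length ∧
      (l'.map R.s).prod = (l.map R.s).prod * R.s i := by
  induction l with
  | nil =>
    exfalso
    simp only [List.map_nil, List.prod_nil, map_one] at h
    exact R.not_pos_and_neg ⟨⟨R.root_simple i, fun m => if m = i then 1 else 0, by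
      rw [Finset.sum_eq_single i] <;> simp +contextual⟩, h⟩
  | cons j t ih =>
    set u := (t.map R.s).prod with hu
    have hprod : ((j :: t).map R.s).prod = R.s j * u := by simp [hu]
    by_cases hn : R.IsNeg (R.toLin u (R.α i))
    · obtain ⟨l', hlen, hp⟩ := ih hn
      refine ⟨j :: l', by simp [hlen], ?_⟩
      simp only [List.map_cons, List.prod_cons, hp, hprod]
      rw [mul_assoc]
    · have hroot : R.isRoot (R.toLin u (R.α i)) := R.root_inv _ _ (R.root_simple i)
      have hpos : R.IsPos (R.toLin u (R.α i)) := by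
        rcases R.pos_or_neg' hroot with h1 | h1
        · exact h1
        · exact absurd h1 hn
      have hβ : R.toLin u (R.α i) = R.α j := by
        by_contra hne
        have := R.s_perm htype j hpos hne
        rw [← R.toLin_mul, ← hprod] at this
        exact R.not_pos_and_neg ⟨this, h⟩
      have hcomm := R.refl_conj hβ
      refine ⟨t, by simp, ?_⟩
      rw [hprod, mul_assoc, ← hcomm, ← mul_assoc, R.s_sq, one_mul]

lemma len_s_of_neg {w : R.W} {i : I} (h : R.IsNeg (R.toLin w (R.α i)))
    (htype : R.IsSimplyLaced ∨ ∃ (n : ℕ) (e : I ≃ Fin n), IsTypeB R n e) :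
    R.len (w * R.s i) + 1 = R.len w := by
  obtain ⟨l, hl, hp⟩ := R.len_spec w
  rw [← hp] at h
  obtain ⟨l', hlen, hp'⟩ := R.exchange htype l i h
  rw [hp] at hp'
  have h1 : R.len (w * R.s i) ≤ l'.length := R.len_le hp'
  have h2 := R.len_le_mul_s w i
  omega

lemma len_s_of_pos {w : R.W} {i : I} (h : R.IsPos (R.toLin w (R.α i)))
    (htype : R.IsSimplyLaced ∨ ∃ (n : ℕ) (e : I ≃ Fin n), IsTypeB R n e) :
    R.len (w * R.s i) = R.len w + 1 := by
  have hneg : R.IsNeg (R.toLin (w * R.s i) (R.α i)) := by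
    show R.IsPos (-(R.toLin (w * R.s i) (R.α i)))
    rw [R.toLin_mul, R.s_apply_self, map_neg, neg_neg]
    exact h
  have := R.len_s_of_neg hneg htype
  rw [mul_assoc, R.s_sq, mul_one] at this
  omega

lemma exists_desc {w : R.W} (h : w ≠ 1)
    (htype : R.IsSimplyLaced ∨ ∃ (n : ℕ) (e : I ≃ Fin n), IsTypeB R n e) :
    ∃ i, R.IsNeg (R.toLin w (R.α i)) := by
  obtain ⟨l, hl, hp⟩ := R.len_spec w
  rcases l.eq_nil_or_concat with rfl | ⟨l₀, i, rfl⟩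
  · exfalso; apply h; simpa using hp.symm
  · refine ⟨i, ?_⟩
    have hroot : R.isRoot (R.toLin w (R.α i)) := R.root_inv _ _ (R.root_simple i)
    rcases R.pos_or_neg' hroot with hpos | hneg
    · exfalso
      have hlen := R.len_s_of_pos hpos htype
      have hws : w * R.s i = (l₀.map R.s).prod := by
        rw [← hp]
        simp [mul_assoc, R.s_sq]
      have h1 : R.len (w * R.s i) ≤ l₀.length := by
        rw [hws]; exact R.len_le rfl
      have h2 : l₀.length + 1 = R.len w := by
        rw [← hl]; simp
      omega
    · exact hneg

end RootSystemData
namespace RootSystemData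

variable {I : Type} [Fintype I] [DecidableEq I] (R : RootSystemData I)

lemma smul_single (q : ℚ) (j : I) :
    q • R.α j = ∑ m, (if m = j then q else 0) • R.α m := by
  rw [Finset.sum_eq_single j]
  · simp
  · intro b _ hb; simp [hb]
  · simp

lemma s_mem_WJ {J : Set I} {j : I} (hj : j ∈ J) : R.s j ∈ R.WJ J :=
  Subgroup.subset_closure ⟨j, hj, rfl⟩

lemma wj_word {J : Set I} {z : R.W} (hz : z ∈ R.WJ J) :
    ∃ l : List I, (∀ j ∈ l, j ∈ J) ∧ (l.map R.s).prod = z := by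
  refine Subgroup.closure_induction ?_ ?_ ?_ ?_ hz
  · rintro x ⟨j, hj, rfl⟩
    exact ⟨[j], by simpa using hj, by simp⟩
  · exact ⟨[], by simp, by simp⟩
  · rintro x y _ _ ⟨lx, hlx, rfl⟩ ⟨ly, hly, rfl⟩
    refine ⟨lx ++ ly, ?_, by simp⟩
    intro j hj
    rcases List.mem_append.mp hj with h | h
    · exact hlx j h
    · exact hly j h
  · rintro x _ ⟨lx, hlx, rfl⟩
    exact ⟨lx.reverse, fun j hj => hlx j (List.mem_reverse.mp hj), R.prod_reverse_inv lx⟩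

lemma wj_coeff {J : Set I} {z : R.W} (hz : z ∈ R.WJ J) (x : R.V) (c : I → ℚ)
    (hx : x = ∑ i, c i • R.α i) :
    ∃ d : I → ℚ, R.toLin z x = ∑ i, d i • R.α i ∧ ∀ m ∉ J, d m = c m := by
  obtain ⟨l, hl, rfl⟩ := R.wj_word hz
  clear hz
  induction l generalizing x c with
  | nil =>
    refine ⟨c, ?_, fun m _ => rfl⟩
    simpa using hx
  | cons j t ih =>
    have hj : j ∈ J := hl j (by simp)
    have hlt : ∀ m ∈ t, m ∈ J := fun m hm => hl m (by simp [hm])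
    obtain ⟨d, hd, hdm⟩ := ih x c hx hlt
    set u := (t.map R.s).prod with hu
    refine ⟨fun m => d m - if m = j then
        (2 * R.B (R.α j) (∑ i, d i • R.α i) / R.B (R.α j) (R.α j)) else 0, ?_, ?_⟩
    · have : ((j :: t).map R.s).prod = R.s j * u := by simp [hu]
      rw [this, R.toLin_mul, R.s_act, hd,
        R.smul_single (2 * R.B (R.α j) (∑ i, d i • R.α i) / R.B (R.α j) (R.α j)) j,
        ← Finset.sum_sub_distrib]
      congr 1; funext m; rw [sub_smul]
    · intro m hm
      have : m ≠ j := fun h => hm (h ▸ hj)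
      simp [this, hdm m hm]

lemma pos_comb_apply {J : Set I} {u : R.W}
    (hu : ∀ j ∈ J, R.IsPos (R.toLin u (R.α j)))
    {γ : R.V} (hγ : R.isRoot γ) (c : I → ℕ) (hc : γ = ∑ i, (c i : ℚ) • R.α i)
    (hsupp : ∀ m ∉ J, c m = 0) : R.IsPos (R.toLin u γ) := by
  classical
  have H : ∀ j, ∃ ec : I → ℕ, j ∈ J → R.toLin u (R.α j) = ∑ m, (ec m : ℚ) • R.α m := by
    intro j
    by_cases hj : j ∈ J
    · obtain ⟨ec, hec⟩ := (hu j hj).2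
      exact ⟨ec, fun _ => hec⟩
    · exact ⟨0, fun h => absurd h hj⟩
  choose ec hec using H
  refine ⟨R.root_inv _ _ hγ, fun m => ∑ j, c j * ec j m, ?_⟩
  have hz : ∀ j, j ∉ J → (c j : ℚ) • R.toLin u (R.α j) = 0 := by
    intro j hj
    rw [hsupp j hj]
    simp
  calc R.toLin u γ = ∑ j, (c j : ℚ) • R.toLin u (R.α j) := by
        rw [hc, map_sum]
        congr 1; funext j; rw [map_smul]
    _ = ∑ j, ∑ m, ((c j * ec j m : ℕ) : ℚ) • R.α m := by
        congr 1; funext j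
        by_cases hj : j ∈ J
        · rw [hec j hj, Finset.smul_sum]
          congr 1; funext m
          rw [smul_smul]
          norm_cast
        · rw [hz j hj]
          have : ∀ m, ((c j * ec j m : ℕ) : ℚ) = 0 := by
            intro m; rw [hsupp j hj]; simp
          symm
          apply Finset.sum_eq_zero
          intro m _
          rw [this m, zero_smul]
    _ = ∑ m, ((∑ j, c j * ec j m : ℕ) : ℚ) • R.α m := by
        rw [Finset.sum_comm]
        congr 1; funext m
        rw [Nat.cast_sum, Finset.sum_smul]

end RootSystemData
namespace RootSystemData

variable {I : Type} [Fintype I] [DecidableEq I] (R : RootSystemData I)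

lemma coords_of_neg {z : R.W} {i : I} (hneg : R.IsNeg (R.toLin z (R.α i)))
    {d : I → ℚ} (hd : R.toLin z (R.α i) = ∑ m, d m • R.α m) :
    ∃ nn : I → ℕ, (∀ m, d m = -(nn m : ℚ)) := by
  obtain ⟨_, nn, hnn⟩ := hneg
  refine ⟨nn, ?_⟩
  have heq : ∑ m, d m • R.α m = ∑ m, (-(nn m : ℚ)) • R.α m := by
    rw [← hd]
    have h1 : R.toLin z (R.α i) = -∑ m, (nn m : ℚ) • R.α m := by
      rw [← hnn, neg_neg]
    rw [h1, ← Finset.sum_neg_distrib]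
    congr 1; funext m; rw [neg_smul]
  exact fun m => congrFun (R.coords_eq heq) m

lemma desc_mem_J {J : Set I} {z : R.W} (hz : z ∈ R.WJ J) {i : I}
    (hneg : R.IsNeg (R.toLin z (R.α i))) : i ∈ J := by
  by_contra hiJ
  obtain ⟨d, hd, hdm⟩ := R.wj_coeff hz (R.α i) (fun m => if m = i then 1 else 0)
    (by rw [← R.smul_single]; simp)
  obtain ⟨nn, hnn⟩ := R.coords_of_neg hneg hd
  have h1 : d i = 1 := by rw [hdm i hiJ]; simp
  have h2 := hnn i
  have : (0:ℚ) ≤ (nn i : ℚ) := Nat.cast_nonneg _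
  rw [h1] at h2
  linarith

lemma neg_coords_supported {J : Set I} {z : R.W} (hz : z ∈ R.WJ J) {i : I} (hi : i ∈ J)
    (hneg : R.IsNeg (R.toLin z (R.α i))) :
    ∃ nn : I → ℕ, -(R.toLin z (R.α i)) = ∑ m, (nn m : ℚ) • R.α m ∧ ∀ m ∉ J, nn m = 0 := by
  obtain ⟨d, hd, hdm⟩ := R.wj_coeff hz (R.α i) (fun m => if m = i then 1 else 0)
    (by rw [← R.smul_single]; simp)
  obtain ⟨nn, hnn⟩ := R.coords_of_neg hneg hd
  refine ⟨nn, ?_, ?_⟩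
  · rw [hd, ← Finset.sum_neg_distrib]
    congr 1; funext m
    rw [hnn m]; rw [neg_smul, neg_neg]
  · intro m hm
    have hmi : m ≠ i := fun h => hm (h ▸ hi)
    have h1 : d m = 0 := by rw [hdm m hm]; simp [hmi]
    have h2 := hnn m
    rw [h1] at h2
    have : (nn m : ℚ) = 0 := by linarith
    exact_mod_cast this

lemma min_rep_mul (htype : R.IsSimplyLaced ∨ ∃ (n : ℕ) (e : I ≃ Fin n), IsTypeB R n e)
    {J : Set I} {u : R.W} (hu : ∀ j ∈ J, R.IsPos (R.toLin u (R.α j))) :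
    ∀ z ∈ R.WJ J, R.len (u * z) = R.len u + R.len z := by
  suffices H : ∀ n z, z ∈ R.WJ J → R.len z = n → R.len (u * z) = R.len u + R.len z by
    intro z hz; exact H _ z hz rfl
  intro n
  induction n using Nat.strong_induction_on with
  | _ n ih =>
    intro z hz hlen
    by_cases h1 : z = 1
    · subst h1; simp [R.len_one]
    · obtain ⟨i, hneg⟩ := R.exists_desc h1 htype
      have hiJ := R.desc_mem_J hz hneg
      have hz' : z * R.s i ∈ R.WJ J := mul_mem hz (R.s_mem_WJ hiJ)
      have hlen' : R.len (z * R.s i) + 1 = R.len z := R.len_s_of_neg hneg htype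
      obtain ⟨nn, hnn, hsupp⟩ := R.neg_coords_supported hz hiJ hneg
      have hδroot : R.isRoot (-(R.toLin z (R.α i))) :=
        R.root_neg (R.root_inv z _ (R.root_simple i))
      have hpos := R.pos_comb_apply hu hδroot nn hnn hsupp
      have huzneg : R.IsNeg (R.toLin (u * z) (R.α i)) := by
        show R.IsPos (-(R.toLin (u * z) (R.α i)))
        rw [R.toLin_mul, ← map_neg]
        exact hpos
      have h2 : R.len (u * z * R.s i) + 1 = R.len (u * z) := R.len_s_of_neg huzneg htype
      rw [mul_assoc] at h2
      have h4 := ih (R.len (z * R.s i)) (by omega) (z * R.s i) hz' rfl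
      omega

lemma isMinRep_iff (htype : R.IsSimplyLaced ∨ ∃ (n : ℕ) (e : I ≃ Fin n), IsTypeB R n e)
    {J : Set I} {u : R.W} :
    R.IsMinRep J u ↔ ∀ j ∈ J, R.IsPos (R.toLin u (R.α j)) := by
  constructor
  · intro hm j hj
    rcases R.pos_or_neg' (R.root_inv u _ (R.root_simple j)) with h | h
    · exact h
    · exfalso
      have hlen := R.len_s_of_neg h htype
      have := hm (R.s j) (R.s_mem_WJ hj)
      omega
  · intro hp z hz
    rw [R.min_rep_mul htype hp z hz]
    omega

lemma decomp (htype : R.IsSimplyLaced ∨ ∃ (n : ℕ) (e : I ≃ Fin n), IsTypeB R n e)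
    (J : Set I) (w : R.W) :
    ∃ u z, R.IsMinRep J u ∧ z ∈ R.WJ J ∧ w = u * z ∧ R.len w = R.len u + R.len z := by
  suffices H : ∀ n w, R.len w = n →
      ∃ u z, R.IsMinRep J u ∧ z ∈ R.WJ J ∧ w = u * z ∧ R.len w = R.len u + R.len z by
    exact H _ w rfl
  intro n
  induction n using Nat.strong_induction_on with
  | _ n ih =>
    intro w hlen
    by_cases hall : ∀ j ∈ J, R.IsPos (R.toLin w (R.α j))
    · exact ⟨w, 1, (R.isMinRep_iff htype).mpr hall, one_mem _, by simp, by simp [R.len_one]⟩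
    · push_neg at hall
      obtain ⟨j, hj, hnp⟩ := hall
      have hneg : R.IsNeg (R.toLin w (R.α j)) := by
        rcases R.pos_or_neg' (R.root_inv w _ (R.root_simple j)) with h | h
        · exact absurd h hnp
        · exact h
      have hlen' : R.len (w * R.s j) + 1 = R.len w := R.len_s_of_neg hneg htype
      obtain ⟨u, z, hu, hz, heq, hl⟩ := ih (R.len (w * R.s j)) (by omega) (w * R.s j) rfl
      have hw2 : w = u * (z * R.s j) := by
        have : w = w * R.s j * R.s j := by rw [mul_assoc, R.s_sq, mul_one]
        rw [this, heq, mul_assoc]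
      refine ⟨u, z * R.s j, hu, mul_mem hz (R.s_mem_WJ hj), hw2, ?_⟩
      have ha : R.len (z * R.s j) ≤ R.len z + 1 := R.len_mul_s_le z j
      have hb : R.len (u * (z * R.s j)) ≤ R.len u + R.len (z * R.s j) := R.len_mul_le _ _
      rw [← hw2] at hb
      omega

lemma decomp_unique (htype : R.IsSimplyLaced ∨ ∃ (n : ℕ) (e : I ≃ Fin n), IsTypeB R n e)
    {J : Set I} {u z u' z' : R.W} (hu : R.IsMinRep J u) (hz : z ∈ R.WJ J)
    (hu' : R.IsMinRep J u') (hz' : z' ∈ R.WJ J) (h : u * z = u' * z') :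
    u = u' ∧ z = z' := by
  have hp := (R.isMinRep_iff htype).mp hu
  have hp' := (R.isMinRep_iff htype).mp hu'
  have ht : z * z'⁻¹ ∈ R.WJ J := mul_mem hz (inv_mem hz')
  have ht' : z' * z⁻¹ ∈ R.WJ J := mul_mem hz' (inv_mem hz)
  have he : u' = u * (z * z'⁻¹) := by
    rw [← mul_assoc, h, mul_assoc, mul_inv_cancel, mul_one]
  have he' : u = u' * (z' * z⁻¹) := by
    rw [← mul_assoc, ← h, mul_assoc, mul_inv_cancel, mul_one]
  have h1 : R.len u' = R.len u + R.len (z * z'⁻¹) := by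
    rw [he]; exact R.min_rep_mul htype hp _ ht
  have h2 : R.len u = R.len u' + R.len (z' * z⁻¹) := by
    rw [he']; exact R.min_rep_mul htype hp' _ ht'
  have h3 : R.len (z * z'⁻¹) = 0 := by omega
  have h4 : z * z'⁻¹ = 1 := R.eq_one_of_len_eq_zero h3
  have hzz : z = z' := by
    have := mul_inv_eq_one.mp h4
    exact this
  constructor
  · rw [he, h4, mul_one]
  · exact hzz

end RootSystemData
/-- In type A, D, E, or B with `ϖ_k` minuscule and `J = I \ {k}`: every
`y ∈ W^J`, `y ≠ e`, factors uniquely as `y = y' z s_k` with `y' ∈ W^J`,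
`z ∈ W_J`, and lengths adding up. -/
theorem stmt8 {I : Type} [Fintype I] [DecidableEq I] (R : RootSystemData I)
    (hirr : R.IsIrreducible)
    (htype : R.IsSimplyLaced ∨ ∃ (n : ℕ) (e : I ≃ Fin n), IsTypeB R n e)
    (k : I) (ϖ : R.V) (hfund : R.IsFundamental k ϖ) (hmin : R.IsMinuscule ϖ)
    (J : Set I) (hJ : J = {i | i ≠ k})
    (y : R.W) (hy : R.IsMinRep J y) (hne : y ≠ 1) :
    ∃! p : R.W × R.W, R.IsMinRep J p.1 ∧ p.2 ∈ R.WJ J ∧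
      y = p.1 * p.2 * R.s k ∧ R.len y = R.len p.1 + R.len p.2 + 1 := by
  have hyk : R.IsNeg (R.toLin y (R.α k)) := by
    obtain ⟨i, hneg⟩ := R.exists_desc hne htype
    have hpos := (R.isMinRep_iff htype).mp hy
    by_cases hik : i = k
    · subst hik; exact hneg
    · exfalso
      have hiJ : i ∈ J := by rw [hJ]; exact hik
      exact R.not_pos_and_neg ⟨hpos i hiJ, hneg⟩
  have hstep : R.len (y * R.s k) + 1 = R.len y := R.len_s_of_neg hyk htype
  obtain ⟨u, z, hu, hz, heq, hl⟩ := R.decomp htype J (y * R.s k)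
  have hyuz : y = u * z * R.s k := by
    have : y = y * R.s k * R.s k := by rw [mul_assoc, R.s_sq, mul_one]
    rw [this, heq]
  refine ⟨(u, z), ⟨hu, hz, hyuz, show R.len y = R.len u + R.len z + 1 by omega⟩, ?_⟩
  rintro ⟨u', z'⟩ ⟨hu', hz', heq', _⟩
  have hys : y * R.s k = u' * z' := by
    rw [heq', mul_assoc, R.s_sq, mul_one]
  have huni := R.decomp_unique htype hu' hz' hu hz (by rw [← hys, ← heq])
  simp only [Prod.mk.injEq]
  exact ⟨huni.1, huni.2⟩
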